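/- Let X be an integrable real random variable and N ~ N(0,1). Then the 1-Wasserstein distance satisfies d_W(X, N) ≤ sup_f |E[f(X)·X − f'(X)]|, where the supremum runs over all C¹ functions f : ℝ → ℝ with ‖f'‖_∞ ≤ 2 whose derivative f' is Lipschitz with constant at most 2. -/

import Mathlib

/-!
Fix a `1`-Lipschitz `h`, centre it as `g = h - E h(N)` and take the solution
`f x = e^{x²/2} ∫_{-∞}^x g φ` of the Stein equation `f' x - x f x = g x`. Then
`E[f(X) X - f'(X)] = E h(N) - E h(X)`, so it suffices that `f'` is bounded by `2` and
`2`-Lipschitz. Since `g` is centred, `∫_{-∞}^x g φ = -∫_x^∞ g φ`, and on either side the integral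
differs from `g x` times the Gaussian mass of that side by at most the first absolute moment of
`t - x` there, which is explicit because `∫_x^∞ t φ = φ x`. With the Mills-ratio bound
`x φ x ≤ (1 + x²) ∫_x^∞ φ`, the side away from the origin bounds `f' φ = g φ + x ∫_{-∞}^x g φ`,
while for `(x f)' φ = (1 + x²) ∫_{-∞}^x g φ + x g φ` the two sides are combined with the weight that
cancels `g x`; hence `|(x f)'| ≤ 1` and `f' = g + x f` is `2`-Lipschitz.
-/

open MeasureTheory ProbabilityTheory Real Set Filter Topology
open scoped NNReal

local notation "φ" => gaussianPDFReal 0 1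

lemma hasDerivAt_gaussianPDFReal (μ : ℝ) (v : ℝ≥0) (x : ℝ) :
    HasDerivAt (gaussianPDFReal μ v) (-(x - μ) / v * gaussianPDFReal μ v x) x := by
  have h : HasDerivAt (fun x => -(x - μ) ^ 2 / (2 * v)) (-(x - μ) / v) x :=
    ((((hasDerivAt_id x).sub_const μ).pow 2).neg.div_const (2 * (v : ℝ))).congr_deriv
      (by simp; ring)
  rw [gaussianPDFReal_def]
  exact (h.exp.const_mul (√(2 * π * v))⁻¹).congr_deriv (by ring)

lemma hasDerivAt_gaussianPDFReal_zero_one (x : ℝ) : HasDerivAt φ (-x * φ x) x := by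
  simpa using hasDerivAt_gaussianPDFReal 0 1 x

lemma tendsto_gaussianPDFReal_atTop (μ : ℝ) (v : ℝ≥0) :
    Tendsto (gaussianPDFReal μ v) atTop (𝓝 0) := by
  rcases eq_or_ne v 0 with rfl | hv
  · rw [gaussianPDFReal_zero_var]
    exact tendsto_const_nhds
  have h : Tendsto (fun x : ℝ => -(x - μ) ^ 2 / (2 * v)) atTop atBot :=
    (tendsto_neg_atTop_atBot.comp ((tendsto_pow_atTop two_ne_zero).comp
      (tendsto_atTop_add_const_right _ (-μ) tendsto_id))).atBot_div_const (by positivity)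
  rw [gaussianPDFReal_def]
  simpa using (tendsto_exp_atBot.comp h).const_mul (√(2 * π * v))⁻¹

lemma gaussianPDFReal_zero_one_neg (x : ℝ) : φ (-x) = φ x := by
  simp [gaussianPDFReal]

lemma gaussianPDFReal_zero_one_le_half (x : ℝ) : φ x ≤ 1 / 2 := by
  have h2 : 2 ≤ √(2 * π) := le_sqrt_of_sq_le (by nlinarith [pi_gt_three])
  have h1 : rexp (-x ^ 2 / 2) ≤ 1 := exp_le_one_iff.2 (by nlinarith [sq_nonneg x])
  calc φ x = (√(2 * π))⁻¹ * rexp (-x ^ 2 / 2) := by simp [gaussianPDFReal]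
    _ ≤ (√(2 * π))⁻¹ * 1 := by gcongr
    _ ≤ 1 / 2 := by rw [mul_one, one_div]; gcongr

lemma integrable_id_mul_gaussianPDFReal_zero_one : Integrable fun x => x * φ x := by
  refine ((integrable_mul_exp_neg_mul_sq (b := 2⁻¹) (by norm_num)).const_mul
    (√(2 * π))⁻¹).congr (ae_of_all _ fun x => ?_)
  simp only [gaussianPDFReal]
  ring_nf
  simp [mul_comm]

lemma integral_Iic_mul_gaussianPDFReal_zero_one_eq_integral_Ioi_neg (f : ℝ → ℝ) (x : ℝ) :
    ∫ t in Iic x, f t * φ t = ∫ t in Ioi (-x), f (-t) * φ t := by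
  have h := integral_comp_neg_Ioi (-x) fun t => f t * φ t
  simp only [neg_neg, gaussianPDFReal_zero_one_neg] at h
  exact h.symm

lemma integral_Ioi_mul_gaussianPDFReal_zero_one (x : ℝ) : ∫ t in Ioi x, t * φ t = φ x := by
  have hderiv : ∀ t ∈ Ici x, HasDerivAt (fun y => -φ y) (t * φ t) t := fun t _ =>
    (hasDerivAt_gaussianPDFReal_zero_one t).neg.congr_deriv (by ring)
  simpa using integral_Ioi_of_hasDerivAt_of_tendsto' hderiv
    integrable_id_mul_gaussianPDFReal_zero_one.integrableOn (tendsto_gaussianPDFReal_atTop 0 1).neg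

lemma integral_Iic_add_integral_Ioi_gaussianPDFReal_zero_one (x : ℝ) :
    (∫ t in Iic x, φ t) + ∫ t in Ioi x, φ t = 1 :=
  (intervalIntegral.integral_Iic_add_Ioi (integrable_gaussianPDFReal 0 1).integrableOn
    (integrable_gaussianPDFReal 0 1).integrableOn).trans
    (integral_gaussianPDFReal_eq_one 0 one_ne_zero)

lemma mul_gaussianPDFReal_zero_one_le_integral_Ioi (x : ℝ) :
    x * φ x ≤ (1 + x ^ 2) * ∫ t in Ioi x, φ t := by
  have hderiv : ∀ t ∈ Ici x, HasDerivAt (fun y => -(y * φ y / (1 + y ^ 2)))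
      (φ t - 2 / (1 + t ^ 2) ^ 2 * φ t) t := fun t _ =>
    (((hasDerivAt_id' t).mul (hasDerivAt_gaussianPDFReal_zero_one t)).div
      ((hasDerivAt_pow 2 t).const_add 1) (by positivity)).neg.congr_deriv
      (by simp only [Pi.mul_apply]; field_simp; ring)
  have hint : Integrable fun t => 2 / (1 + t ^ 2) ^ 2 * φ t :=
    (integrable_gaussianPDFReal 0 1).bdd_mul (c := 2)
      (by fun_prop : Measurable fun t : ℝ => 2 / (1 + t ^ 2) ^ 2).aestronglyMeasurable
      (ae_of_all _ fun t => by
        rw [Real.norm_of_nonneg (by positivity)]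
        exact div_le_self zero_le_two (one_le_pow₀ (le_add_of_nonneg_right (sq_nonneg t))))
  have hlim : Tendsto (fun y => -(y * φ y / (1 + y ^ 2))) atTop (𝓝 0) := by
    refine squeeze_zero_norm (fun y => ?_) (tendsto_gaussianPDFReal_atTop 0 1)
    rw [norm_neg, Real.norm_eq_abs, abs_div, abs_mul, abs_of_nonneg (gaussianPDFReal_nonneg 0 1 y),
      abs_of_pos (by positivity : (0 : ℝ) < 1 + y ^ 2), div_le_iff₀ (by positivity)]
    nlinarith [abs_nonneg y, sq_abs y, gaussianPDFReal_nonneg 0 1 y, sq_nonneg (|y| - 1)]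
  have hftc := integral_Ioi_of_hasDerivAt_of_tendsto' hderiv
    ((integrable_gaussianPDFReal 0 1).sub hint).integrableOn hlim
  rw [integral_sub (integrable_gaussianPDFReal 0 1).integrableOn hint.integrableOn] at hftc
  have hpos : 0 ≤ ∫ t in Ioi x, 2 / (1 + t ^ 2) ^ 2 * φ t :=
    setIntegral_nonneg measurableSet_Ioi fun t _ =>
      mul_nonneg (by positivity) (gaussianPDFReal_nonneg 0 1 t)
  rw [← div_le_iff₀' (by positivity)]
  linarith

lemma neg_mul_gaussianPDFReal_zero_one_le_integral_Iic (x : ℝ) :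
    -(x * φ x) ≤ (1 + x ^ 2) * ∫ t in Iic x, φ t := by
  have h : ∫ t in Iic x, φ t = ∫ t in Ioi (-x), φ t := by
    simpa using integral_Iic_mul_gaussianPDFReal_zero_one_eq_integral_Ioi_neg (fun _ => 1) x
  simpa [h, gaussianPDFReal_zero_one_neg] using mul_gaussianPDFReal_zero_one_le_integral_Ioi (-x)

lemma hasDerivAt_integral_Iic {E : Type*} [NormedAddCommGroup E] [NormedSpace ℝ E]
    [CompleteSpace E] {ψ : ℝ → E} (hψ : Integrable ψ) {x : ℝ} (hx : ContinuousAt ψ x) :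
    HasDerivAt (fun u => ∫ t in Iic u, ψ t) (ψ x) x := by
  have h : ∀ u, ∫ t in Iic u, ψ t = (∫ t in Iic 0, ψ t) + ∫ t in (0 : ℝ)..u, ψ t := fun u => by
    rw [← intervalIntegral.integral_Iic_sub_Iic hψ.integrableOn hψ.integrableOn]
    abel
  exact ((intervalIntegral.integral_hasDerivAt_right hψ.intervalIntegrable
    hψ.aestronglyMeasurable.stronglyMeasurableAtFilter hx).const_add _).congr_of_eventuallyEq
    (Eventually.of_forall h)

lemma LipschitzWith.integrable_comp {α E F : Type*} [MeasurableSpace α] {μ : Measure α}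
    [IsFiniteMeasure μ] [NormedAddCommGroup E] [NormedAddCommGroup F] {K : ℝ≥0} {g : E → F}
    (hg : LipschitzWith K g) {f : α → E} (hf : Integrable f μ) :
    Integrable (fun a => g (f a)) μ := by
  have h0 : LipschitzWith K fun x => g x - g 0 := by simpa using hg.sub (LipschitzWith.const (g 0))
  have := h0.comp_memLp (by simp) (memLp_one_iff_integrable.2 hf)
  exact ((memLp_one_iff_integrable.1 this).add (integrable_const (g 0))).congr
    (ae_of_all _ fun a => by simp)

lemma LipschitzWith.integrable_mul_gaussianPDFReal_zero_one {K : ℝ≥0} {g : ℝ → ℝ}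
    (hg : LipschitzWith K g) : Integrable fun t => g t * φ t := by
  refine (((integrable_gaussianPDFReal 0 1).const_mul |g 0|).add
    (integrable_id_mul_gaussianPDFReal_zero_one.norm.const_mul K)).mono'
    (hg.continuous.measurable.mul (measurable_gaussianPDFReal 0 1)).aestronglyMeasurable
    (ae_of_all _ fun t => ?_)
  have hgt : |g t| ≤ |g 0| + K * |t| := by
    have := hg.dist_le_mul t 0
    rw [Real.dist_eq, Real.dist_eq, sub_zero] at this
    linarith [abs_sub_abs_le_abs_sub (g t) (g 0)]
  have hφ := gaussianPDFReal_nonneg 0 1 t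
  simp only [Pi.add_apply, norm_mul, Real.norm_eq_abs, abs_of_nonneg hφ]
  nlinarith

lemma integrable_abs_sub_mul_gaussianPDFReal_zero_one (x : ℝ) :
    Integrable fun t => |t - x| * φ t := by
  refine (integrable_id_mul_gaussianPDFReal_zero_one.sub
    ((integrable_gaussianPDFReal 0 1).const_mul x)).abs.congr (ae_of_all _ fun t => ?_)
  simp only [Pi.sub_apply, ← sub_mul, abs_mul, abs_of_nonneg (gaussianPDFReal_nonneg 0 1 t)]

lemma abs_setIntegral_sub_mul_gaussianPDFReal_zero_one_le {g : ℝ → ℝ} (hg : LipschitzWith 1 g)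
    (s : Set ℝ) (x : ℝ) : |∫ t in s, (g t - g x) * φ t| ≤ ∫ t in s, |t - x| * φ t := by
  rw [← Real.norm_eq_abs]
  refine norm_integral_le_of_norm_le
    (integrable_abs_sub_mul_gaussianPDFReal_zero_one x).integrableOn (ae_of_all _ fun t => ?_)
  rw [norm_mul, Real.norm_of_nonneg (gaussianPDFReal_nonneg 0 1 t)]
  exact mul_le_mul_of_nonneg_right (by simpa [Real.dist_eq] using hg.dist_le_mul t x)
    (gaussianPDFReal_nonneg 0 1 t)

lemma abs_integral_Ioi_mul_gaussianPDFReal_zero_one_sub_le {g : ℝ → ℝ} (hg : LipschitzWith 1 g)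
    (x : ℝ) : |(∫ t in Ioi x, g t * φ t) - g x * ∫ t in Ioi x, φ t|
      ≤ φ x - x * ∫ t in Ioi x, φ t := by
  have hφ := (integrable_gaussianPDFReal 0 1).integrableOn (s := Ioi x)
  have hdev : (∫ t in Ioi x, g t * φ t) - g x * ∫ t in Ioi x, φ t
      = ∫ t in Ioi x, (g t - g x) * φ t := by
    rw [← integral_const_mul, ← integral_sub hg.integrable_mul_gaussianPDFReal_zero_one.integrableOn
      (hφ.const_mul _)]
    simp_rw [sub_mul]
  have hbound : ∫ t in Ioi x, |t - x| * φ t = φ x - x * ∫ t in Ioi x, φ t := by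
    rw [setIntegral_congr_fun measurableSet_Ioi fun t (ht : x < t) => by
      rw [abs_of_pos (sub_pos.2 ht), sub_mul], integral_sub
      integrable_id_mul_gaussianPDFReal_zero_one.integrableOn (hφ.const_mul x),
      integral_Ioi_mul_gaussianPDFReal_zero_one, integral_const_mul]
  rw [hdev, ← hbound]
  exact abs_setIntegral_sub_mul_gaussianPDFReal_zero_one_le hg _ x

lemma abs_integral_Iic_mul_gaussianPDFReal_zero_one_sub_le {g : ℝ → ℝ} (hg : LipschitzWith 1 g)
    (x : ℝ) : |(∫ t in Iic x, g t * φ t) - g x * ∫ t in Iic x, φ t|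
      ≤ x * (∫ t in Iic x, φ t) + φ x := by
  have hneg : LipschitzWith 1 fun t => g (-t) := by
    simpa [Function.comp_def] using hg.comp LipschitzWith.id.neg
  have h := abs_integral_Ioi_mul_gaussianPDFReal_zero_one_sub_le hneg (-x)
  have hΦ : ∫ t in Iic x, φ t = ∫ t in Ioi (-x), φ t := by
    simpa using integral_Iic_mul_gaussianPDFReal_zero_one_eq_integral_Ioi_neg (fun _ => 1) x
  simp only [neg_neg, gaussianPDFReal_zero_one_neg, neg_mul, sub_neg_eq_add] at h
  rwa [hΦ, integral_Iic_mul_gaussianPDFReal_zero_one_eq_integral_Ioi_neg, add_comm]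

lemma integral_Ioi_eq_neg_integral_Iic {E : Type*} [NormedAddCommGroup E] [NormedSpace ℝ E]
    {f : ℝ → E} (hf : Integrable f) (h0 : ∫ t, f t = 0) (x : ℝ) :
    ∫ t in Ioi x, f t = -∫ t in Iic x, f t := by
  rw [eq_neg_iff_add_eq_zero, add_comm, intervalIntegral.integral_Iic_add_Ioi hf.integrableOn
    hf.integrableOn, h0]

lemma abs_le_two_mul_gaussianPDFReal_zero_one_add_abs {g : ℝ → ℝ} (hg : LipschitzWith 1 g)
    (h0 : ∫ t, g t * φ t = 0) (x : ℝ) : |g x| ≤ 2 * φ x + |x| := by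
  have hsum := integral_Iic_add_integral_Ioi_gaussianPDFReal_zero_one x
  have hm := integral_Ioi_eq_neg_integral_Iic hg.integrable_mul_gaussianPDFReal_zero_one h0 x
  have h1 := abs_le.1 (abs_integral_Iic_mul_gaussianPDFReal_zero_one_sub_le hg x)
  have h2 := abs_le.1 (abs_integral_Ioi_mul_gaussianPDFReal_zero_one_sub_le hg x)
  have hΦ : 0 ≤ ∫ t in Iic x, φ t :=
    setIntegral_nonneg measurableSet_Iic fun t _ => gaussianPDFReal_nonneg 0 1 t
  have hΨ : 0 ≤ ∫ t in Ioi x, φ t :=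
    setIntegral_nonneg measurableSet_Ioi fun t _ => gaussianPDFReal_nonneg 0 1 t
  have hx : |x * (∫ t in Iic x, φ t) - x * ∫ t in Ioi x, φ t| ≤ |x| := by
    rw [← mul_sub, abs_mul]
    exact mul_le_of_le_one_right (abs_nonneg x) (abs_le.2 ⟨by linarith, by linarith⟩)
  have hsplit : g x = (g x * (∫ t in Iic x, φ t) - ∫ t in Iic x, g t * φ t)
      + (g x * (∫ t in Ioi x, φ t) - ∫ t in Ioi x, g t * φ t) := by
    rw [hm]
    linear_combination (-g x) * hsum
  rw [abs_le]
  constructor <;> linarith [abs_le.1 hx]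

lemma abs_mul_add_mul_le_two_mul {a x r T p : ℝ} (hr : |r| ≤ T) (hT : T * (1 + x ^ 2) ≤ p)
    (ha : |a| ≤ 2 * p + |x|) (hp : p ≤ 1 / 2) : |a * T + x * r| ≤ 2 * p := by
  have hT0 : 0 ≤ T := (abs_nonneg r).trans hr
  have hp0 : 0 ≤ p := le_trans (by positivity) hT
  have hx : 0 < 1 + x ^ 2 := by positivity
  have hsum : |a * T + x * r| ≤ (2 * p + 2 * |x|) * T := by
    calc |a * T + x * r| ≤ |a| * T + |x| * |r| := by
          simpa [abs_mul, abs_of_nonneg hT0] using abs_add_le (a * T) (x * r)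
      _ ≤ (2 * p + |x|) * T + |x| * T := by gcongr
      _ = (2 * p + 2 * |x|) * T := by ring
  refine hsum.trans (le_of_mul_le_mul_right ?_ hx)
  nlinarith [mul_le_mul_of_nonneg_left hT (by positivity : (0 : ℝ) ≤ 2 * p + 2 * |x|), sq_abs x,
    sq_nonneg (|x| - 1 / 2), abs_nonneg x]

lemma abs_one_add_sq_mul_add_le {x p a m Φ Ψ : ℝ} (hsum : Φ + Ψ = 1)
    (hΨ : x * p ≤ (1 + x ^ 2) * Ψ) (hΦ : -(x * p) ≤ (1 + x ^ 2) * Φ)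
    (h1 : |m - a * Φ| ≤ x * Φ + p) (h2 : |-m - a * Ψ| ≤ p - x * Ψ) :
    |(1 + x ^ 2) * m + x * a * p| ≤ p := by
  -- `W / (1 + x²)` and `1 - W / (1 + x²)` weigh the two tails so that the `a`-terms cancel.
  set W := (1 + x ^ 2) * Ψ - x * p
  have hW : 0 ≤ W := by linarith
  have hW' : 0 ≤ 1 + x ^ 2 - W := by linear_combination hΦ + (1 + x ^ 2) * hsum
  calc |(1 + x ^ 2) * m + x * a * p| = |W * (m - a * Φ) - (1 + x ^ 2 - W) * (-m - a * Ψ)| := by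
        congr 1
        linear_combination (W * a) * hsum
    _ ≤ |W * (m - a * Φ)| + |(1 + x ^ 2 - W) * (-m - a * Ψ)| := abs_sub _ _
    _ = W * |m - a * Φ| + (1 + x ^ 2 - W) * |-m - a * Ψ| := by
        rw [abs_mul, abs_mul, abs_of_nonneg hW, abs_of_nonneg hW']
    _ ≤ W * (x * Φ + p) + (1 + x ^ 2 - W) * (p - x * Ψ) := by gcongr
    _ = p := by linear_combination (x * W) * hsum

lemma abs_mul_gaussianPDFReal_zero_one_add_mul_integral_Iic_le {g : ℝ → ℝ}
    (hg : LipschitzWith 1 g) (h0 : ∫ t, g t * φ t = 0) (x : ℝ) :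
    |g x * φ x + x * ∫ t in Iic x, g t * φ t| ≤ 2 * φ x := by
  have hm := integral_Ioi_eq_neg_integral_Iic hg.integrable_mul_gaussianPDFReal_zero_one h0 x
  have hgx := abs_le_two_mul_gaussianPDFReal_zero_one_add_abs hg h0 x
  have hp := gaussianPDFReal_zero_one_le_half x
  rcases le_or_gt 0 x with hx | hx
  · have hM := mul_le_mul_of_nonneg_left (mul_gaussianPDFReal_zero_one_le_integral_Ioi x) hx
    have hr := abs_integral_Ioi_mul_gaussianPDFReal_zero_one_sub_le hg x
    rw [hm] at hr
    calc |g x * φ x + x * ∫ t in Iic x, g t * φ t|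
        = |g x * (φ x - x * ∫ t in Ioi x, φ t)
            + x * -(-(∫ t in Iic x, g t * φ t) - g x * ∫ t in Ioi x, φ t)| := by ring_nf
      _ ≤ 2 * φ x := abs_mul_add_mul_le_two_mul (by rwa [abs_neg]) (by nlinarith) hgx hp
  · have hM := mul_le_mul_of_nonpos_left (neg_mul_gaussianPDFReal_zero_one_le_integral_Iic x) hx.le
    have hr := abs_integral_Iic_mul_gaussianPDFReal_zero_one_sub_le hg x
    calc |g x * φ x + x * ∫ t in Iic x, g t * φ t|
        = |g x * (φ x + x * ∫ t in Iic x, φ t)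
            + x * ((∫ t in Iic x, g t * φ t) - g x * ∫ t in Iic x, φ t)| := by ring_nf
      _ ≤ 2 * φ x := abs_mul_add_mul_le_two_mul (by rwa [add_comm]) (by nlinarith) hgx hp

lemma abs_one_add_sq_mul_integral_Iic_add_le {g : ℝ → ℝ} (hg : LipschitzWith 1 g)
    (h0 : ∫ t, g t * φ t = 0) (x : ℝ) :
    |(1 + x ^ 2) * (∫ t in Iic x, g t * φ t) + x * g x * φ x| ≤ φ x := by
  have hr := abs_integral_Ioi_mul_gaussianPDFReal_zero_one_sub_le hg x
  rw [integral_Ioi_eq_neg_integral_Iic hg.integrable_mul_gaussianPDFReal_zero_one h0 x] at hr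
  exact abs_one_add_sq_mul_add_le (integral_Iic_add_integral_Ioi_gaussianPDFReal_zero_one x)
    (mul_gaussianPDFReal_zero_one_le_integral_Ioi x)
    (neg_mul_gaussianPDFReal_zero_one_le_integral_Iic x)
    (abs_integral_Iic_mul_gaussianPDFReal_zero_one_sub_le hg x) hr

noncomputable def steinSolution (g : ℝ → ℝ) (x : ℝ) : ℝ := (∫ t in Iic x, g t * φ t) / φ x

lemma hasDerivAt_steinSolution {g : ℝ → ℝ} (hgi : Integrable fun t => g t * φ t) {x : ℝ}
    (hgx : ContinuousAt g x) :
    HasDerivAt (steinSolution g) (g x + x * steinSolution g x) x := by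
  have hφ := hasDerivAt_gaussianPDFReal_zero_one x
  have hφ0 := (gaussianPDFReal_pos 0 1 x one_ne_zero).ne'
  refine ((hasDerivAt_integral_Iic hgi (hgx.mul hφ.continuousAt)).div hφ hφ0).congr_deriv ?_
  simp only [steinSolution]
  field_simp
  ring

lemma abs_deriv_steinSolution_le {g : ℝ → ℝ} (hg : LipschitzWith 1 g) (h0 : ∫ t, g t * φ t = 0)
    (x : ℝ) : |g x + x * steinSolution g x| ≤ 2 := by
  have hφ := gaussianPDFReal_pos 0 1 x one_ne_zero
  have e : g x + x * steinSolution g x = (g x * φ x + x * ∫ t in Iic x, g t * φ t) / φ x := by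
    simp only [steinSolution]
    field_simp
  rw [e, abs_div, abs_of_pos hφ, div_le_iff₀ hφ]
  exact abs_mul_gaussianPDFReal_zero_one_add_mul_integral_Iic_le hg h0 x

lemma lipschitzWith_id_mul_steinSolution {g : ℝ → ℝ} (hg : LipschitzWith 1 g)
    (h0 : ∫ t, g t * φ t = 0) : LipschitzWith 1 fun x => x * steinSolution g x := by
  have hderiv (x : ℝ) : HasDerivAt (fun y => y * steinSolution g y)
      (steinSolution g x + x * (g x + x * steinSolution g x)) x :=
    ((hasDerivAt_id' x).mul (hasDerivAt_steinSolution hg.integrable_mul_gaussianPDFReal_zero_one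
      hg.continuous.continuousAt)).congr_deriv (by ring)
  refine lipschitzWith_of_nnnorm_deriv_le (fun x => (hderiv x).differentiableAt) fun x => ?_
  have hφ := gaussianPDFReal_pos 0 1 x one_ne_zero
  have e : steinSolution g x + x * (g x + x * steinSolution g x)
      = ((1 + x ^ 2) * (∫ t in Iic x, g t * φ t) + x * g x * φ x) / φ x := by
    simp only [steinSolution]
    field_simp
    ring
  rw [(hderiv x).deriv, ← NNReal.coe_le_coe, coe_nnnorm, NNReal.coe_one, Real.norm_eq_abs, e,
    abs_div, abs_of_pos hφ, div_le_one hφ]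
  exact abs_one_add_sq_mul_integral_Iic_add_le hg h0 x

lemma lipschitzWith_deriv_steinSolution {g : ℝ → ℝ} (hg : LipschitzWith 1 g)
    (h0 : ∫ t, g t * φ t = 0) : LipschitzWith 2 fun x => g x + x * steinSolution g x := by
  simpa [one_add_one_eq_two] using hg.add (lipschitzWith_id_mul_steinSolution hg h0)

lemma LipschitzWith.integral_sub_integral_gaussianReal_mul_eq_zero {K : ℝ≥0} {h : ℝ → ℝ}
    (hh : LipschitzWith K h) : ∫ t, (h t - ∫ y, h y ∂gaussianReal 0 1) * φ t = 0 := by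
  simp_rw [sub_mul]
  rw [integral_sub hh.integrable_mul_gaussianPDFReal_zero_one
      ((integrable_gaussianPDFReal 0 1).const_mul _), integral_const_mul,
    integral_gaussianPDFReal_eq_one 0 one_ne_zero, mul_one,
    integral_gaussianReal_eq_integral_smul one_ne_zero]
  simp_rw [smul_eq_mul, mul_comm, sub_self]

theorem wasserstein_stein_bound_general
    {Ω : Type*} [MeasurableSpace Ω] (P : Measure Ω) [IsProbabilityMeasure P]
    (X : Ω → ℝ) (hXint : Integrable X P)
    (C : ℝ)
    (hC : ∀ f f' : ℝ → ℝ, (∀ x, HasDerivAt f (f' x) x) →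
      (∀ x, |f' x| ≤ 2) → LipschitzWith 2 f' →
      |∫ ω, (f (X ω) * X ω - f' (X ω)) ∂P| ≤ C) :
    ∀ h : ℝ → ℝ, LipschitzWith 1 h →
      |∫ ω, h (X ω) ∂P - ∫ y, h y ∂(gaussianReal 0 1)| ≤ C := by
  intro h hh
  set c := ∫ y, h y ∂gaussianReal 0 1
  set g : ℝ → ℝ := fun t => h t - c
  have hg : LipschitzWith 1 g := by simpa using hh.sub (LipschitzWith.const c)
  have h0 : ∫ t, g t * φ t = 0 := hh.integral_sub_integral_gaussianReal_mul_eq_zero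
  have hstein := hC (steinSolution g) (fun x => g x + x * steinSolution g x)
    (fun x => hasDerivAt_steinSolution hg.integrable_mul_gaussianPDFReal_zero_one
      hg.continuous.continuousAt)
    (abs_deriv_steinSolution_le hg h0) (lipschitzWith_deriv_steinSolution hg h0)
  calc |∫ ω, h (X ω) ∂P - c| = |∫ ω, (c - h (X ω)) ∂P| := by
        rw [integral_sub (integrable_const c) (hh.integrable_comp hXint), integral_const,
          probReal_univ, one_smul, abs_sub_comm]
    _ = |∫ ω, (steinSolution g (X ω) * X ω - (g (X ω) + X ω * steinSolution g (X ω))) ∂P| := by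
        congr 2
        ext ω
        ring
    _ ≤ C := hstein

/-- Stein bound for the 1-Wasserstein distance: for integrable `X` and `N ~ N(0,1)`,
`d_W(X,N) ≤ sup_f |E[f(X)X − f'(X)]|`, the supremum being over all `C¹`
functions `f` with `‖f'‖_∞ ≤ 2` and `f'` Lipschitz with constant `2`.
The inequality between suprema is expressed as: every upper bound `C` of the
right-hand side set is an upper bound of `|E[h(X)] − E[h(N)]|` for every
`1`-Lipschitz `h`. -/
theorem wasserstein_stein_bound
    {Ω : Type*} [MeasurableSpace Ω] (P : Measure Ω) [IsProbabilityMeasure P]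
    (X : Ω → ℝ) (hX : Measurable X) (hXint : Integrable X P)
    (C : ℝ)
    (hC : ∀ f f' : ℝ → ℝ, (∀ x, HasDerivAt f (f' x) x) →
      (∀ x, |f' x| ≤ 2) → LipschitzWith 2 f' →
      |∫ ω, (f (X ω) * X ω - f' (X ω)) ∂P| ≤ C) :
    ∀ h : ℝ → ℝ, LipschitzWith 1 h →
      |∫ ω, h (X ω) ∂P - ∫ y, h y ∂(gaussianReal 0 1)| ≤ C :=
  wasserstein_stein_bound_general P X hXint C hC
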